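/- arXiv:2604.08071 — 3 statements merged into one kernel-verified Lean document; each statement's English description precedes it below -/
import Mathlib

section
/- Let G be a directed graph and let (s,t) be a superbubble of G with superbubble graph B. Then no vertex in the interior of B (i.e., in V(B)\{s,t}) is a cutvertex of the underlying undirected graph of G. -/
/-!
Directed graphs are modelled as binary relations `G : V → V → Prop` on a vertex type `V`
(the vertex set of `G` is all of `V`); `G a b` means there is a directed edge from `a` to `b`.
Subgraphs induced by a vertex set `X : Set V` are modelled by restricting the relation to `X`.
-/

namespace Paper

variable {V : Type}

/-- The restriction (induced subgraph) of a relation to a vertex set `X`. -/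
def restrict (R : V → V → Prop) (X : Set V) : V → V → Prop :=
  fun a b => a ∈ X ∧ b ∈ X ∧ R a b

/-- Symmetric closure: the adjacency of the underlying undirected graph of a digraph. -/
def symcl (R : V → V → Prop) : V → V → Prop := fun a b => R a b ∨ R b a

/-- `p` is a directed walk from `a` to `b` (a nonempty list of consecutively adjacent
vertices starting at `a` and ending at `b`). -/
def IsDiWalk (R : V → V → Prop) (p : List V) (a b : V) : Prop :=
  p.Chain' R ∧ p.head? = some a ∧ p.getLast? = some b

/-- A directed path: a directed walk with no repeated vertex. -/
def IsDiPath (R : V → V → Prop) (p : List V) (a b : V) : Prop :=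
  IsDiWalk R p a b ∧ p.Nodup

/-- An undirected path from `a` to `b` in the underlying undirected graph of `R`. -/
def IsUPath (R : V → V → Prop) (p : List V) (a b : V) : Prop :=
  IsDiPath (symcl R) p a b

/-- Directed reachability (`a` reaches `b`). -/
def Reaches (R : V → V → Prop) (a b : V) : Prop := Relation.ReflTransGen R a b

/-- Undirected connectivity between `a` and `b` inside the vertex set `X`
(in the underlying undirected graph of the subgraph of `R` induced by `X`). -/
def UConn (R : V → V → Prop) (X : Set V) (a b : V) : Prop :=
  Relation.ReflTransGen (restrict (symcl R) X) a b

/-- `v` is a cutvertex of the underlying undirected graph of the subgraph induced by `X`: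
some two other vertices of `X` are connected in `X` but no longer connected
after deleting `v`. -/
def IsCutvertexOn (R : V → V → Prop) (X : Set V) (v : V) : Prop :=
  v ∈ X ∧ ∃ a ∈ X, ∃ b ∈ X, a ≠ v ∧ b ≠ v ∧ UConn R X a b ∧ ¬ UConn R (X \ {v}) a b

/-- `(s,t)` is a superbubbloid of `G` with superbubbloid graph `G[X]`. -/
structure IsSuperbubbloid (G : V → V → Prop) (X : Set V) (s t : V) : Prop where
  s_mem : s ∈ X
  t_mem : t ∈ X
  /-- (1) every `u ∈ X` is reachable from `s` -/
  reach_from_s : ∀ u ∈ X, Reaches G s u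
  /-- (2) `t` is reachable from every `u ∈ X` -/
  reach_to_t : ∀ u ∈ X, Reaches G u t
  /-- (3) every directed path entering `X` from outside goes through `s` -/
  enter_via_s : ∀ u ∈ X, ∀ w, w ∉ X → ∀ p : List V, IsDiPath G p w u → s ∈ p
  /-- (4) every directed path leaving `X` goes through `t` -/
  exit_via_t : ∀ u ∈ X, ∀ w, w ∉ X → ∀ p : List V, IsDiPath G p u w → t ∈ p
  /-- (5) if `uv` is an edge of `G[X]`, every directed `v`-`u` path in `G`
  contains both `t` and `s` -/
  acyclic : ∀ u ∈ X, ∀ v ∈ X, G u v → ∀ p : List V, IsDiPath G p v u → t ∈ p ∧ s ∈ p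
  /-- (6) the edge `ts` is not present -/
  no_back_edge : ¬ G t s

/-- `(s,t)` is a superbubbloid (for some vertex set). -/
def IsSuperbubbloidPair (G : V → V → Prop) (s t : V) : Prop :=
  ∃ X : Set V, IsSuperbubbloid G X s t

/-- `(s,t)` is a superbubble with superbubble graph `G[X]`: a superbubbloid such that
no `s' ∈ X \ {s}` makes `(s',t)` a superbubbloid. -/
def IsSuperbubble (G : V → V → Prop) (X : Set V) (s t : V) : Prop :=
  IsSuperbubbloid G X s t ∧ ∀ s' ∈ X, s' ≠ s → ¬ IsSuperbubbloidPair G s' t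


/-!
Let `w` be an interior vertex of the superbubble. All edges at `w` stay inside `X`, and by the
acyclicity condition (5) a directed path from `s` to an in-neighbour of `w`, or from an
out-neighbour of `w` to `t`, cannot pass through `w`. So in `G - w` every neighbour of `w` is
joined to `s` or to `t`. If `s` and `t` were separated in `G - w`, the vertices of `X` that are
`w` or joined to `t` in `G - w` would make `(w, t)` a superbubbloid, against the minimality of
the superbubble. Hence all neighbours of `w` lie in one component of `G - w`.
-/

section Walks

variable {R : V → V → Prop} {p : List V} {a b w : V}

theorem IsDiWalk.reflTransGen (hp : IsDiWalk R p a b) : Relation.ReflTransGen R a b := by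
  obtain ⟨hc, ha, hb⟩ := hp
  obtain ⟨l, rfl⟩ := List.head?_eq_some_iff.mp ha
  rw [List.getLast?_eq_some_getLast (List.cons_ne_nil a l), Option.some_inj] at hb
  exact List.relationReflTransGen_of_exists_isChain_cons l hc hb

theorem IsDiPath.head_mem (hp : IsDiPath R p a b) : a ∈ p :=
  List.mem_of_mem_head? hp.1.2.1

theorem IsDiPath.getLast_mem (hp : IsDiPath R p a b) : b ∈ p :=
  List.mem_of_mem_getLast? hp.1.2.2

theorem isDiPath_pair (h : R a b) (hab : a ≠ b) : IsDiPath R [a, b] a b :=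
  ⟨⟨List.isChain_pair.mpr h, rfl, rfl⟩, by simp [hab]⟩

theorem Reaches.exists_isDiPath (h : Reaches R a b) : ∃ p, IsDiPath R p a b := by
  induction h using Relation.ReflTransGen.head_induction_on with
  | refl => exact ⟨[b], ⟨List.isChain_singleton b, rfl, rfl⟩, List.nodup_singleton b⟩
  | @head x c hxc _ ih =>
    obtain ⟨q, ⟨hch, hhd, hlast⟩, hnd⟩ := ih
    by_cases hxq : x ∈ q
    · -- shortcut the cycle through `x`
      obtain ⟨q₁, q₂, rfl⟩ := List.append_of_mem hxq
      refine ⟨x :: q₂, ⟨hch.suffix (List.suffix_append _ _), rfl, ?_⟩,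
        hnd.of_append_right⟩
      rwa [List.getLast?_append_of_ne_nil _ (List.cons_ne_nil _ _)] at hlast
    · obtain ⟨l, rfl⟩ := List.head?_eq_some_iff.mp hhd
      refine ⟨x :: c :: l, ⟨hch.cons_cons hxc, rfl, ?_⟩, List.nodup_cons.mpr ⟨hxq, hnd⟩⟩
      rwa [List.getLast?_cons_cons]

theorem IsDiPath.exists_suffix (hp : IsDiPath R p a b) (hw : w ∈ p) :
    ∃ r, IsDiPath R r w b ∧ r ⊆ p ∧ (a ∈ r → a = w) := by
  obtain ⟨⟨hch, hhd, hlast⟩, hnd⟩ := hp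
  obtain ⟨q, r, rfl⟩ := List.append_of_mem hw
  refine ⟨w :: r, ⟨⟨hch.suffix (List.suffix_append _ _), rfl, ?_⟩, hnd.of_append_right⟩,
    List.subset_append_right _ _, ?_⟩
  · rwa [List.getLast?_append_of_ne_nil _ (List.cons_ne_nil _ _)] at hlast
  · intro ha
    cases q with
    | nil => simpa using hhd.symm
    | cons z l =>
      obtain rfl : z = a := by simpa using hhd
      exact absurd (List.mem_append_right l ha) (List.nodup_cons.mp hnd).1

theorem IsDiPath.exists_prefix (hp : IsDiPath R p a b) (hw : w ∈ p) :
    ∃ q, IsDiPath R q a w ∧ (b ∈ q → b = w) := by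
  obtain ⟨⟨hch, hhd, hlast⟩, hnd⟩ := hp
  obtain ⟨q, r, rfl⟩ := List.append_of_mem hw
  have hpre : q ++ [w] <+: q ++ w :: r := by simp
  refine ⟨q ++ [w], ⟨⟨hch.prefix hpre, ?_, List.getLast?_concat⟩, hnd.sublist hpre.sublist⟩,
    ?_⟩
  · cases q <;> simpa using hhd
  · intro hb
    rw [List.getLast?_append_of_ne_nil _ (List.cons_ne_nil _ _)] at hlast
    rcases List.mem_append.mp hb with hbq | hbw
    · exact absurd (List.mem_of_mem_getLast? hlast) (List.disjoint_of_nodup_append hnd hbq)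
    · simpa using hbw

theorem IsDiPath.exists_cons (hp : IsDiPath R p a b) (hab : a ≠ b) :
    ∃ v q, R a v ∧ IsDiPath R q v b ∧ a ∉ q := by
  obtain ⟨⟨hch, hhd, hlast⟩, hnd⟩ := hp
  obtain ⟨l, rfl⟩ := List.head?_eq_some_iff.mp hhd
  cases l with
  | nil => exact absurd (by simpa using hlast) hab
  | cons v l =>
    rw [List.getLast?_cons_cons] at hlast
    obtain ⟨hav, hch⟩ := List.isChain_cons_cons.mp hch
    exact ⟨v, v :: l, hav, ⟨⟨hch, rfl, hlast⟩, hnd.of_cons⟩, (List.nodup_cons.mp hnd).1⟩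

end Walks

section Connectivity

variable {G : V → V → Prop} {X Y : Set V} {p : List V} {a b c w : V}

theorem UConn.symm (h : UConn G Y a b) : UConn G Y b a := by
  induction h with
  | refl => exact .refl
  | tail _ hbc ih => exact .head ⟨hbc.2.1, hbc.1, Or.symm hbc.2.2⟩ ih

theorem UConn.trans (hab : UConn G Y a b) (hbc : UConn G Y b c) : UConn G Y a c :=
  Relation.ReflTransGen.trans hab hbc

theorem IsDiWalk.uconn (hp : IsDiWalk G p a b) (hY : ∀ x ∈ p, x ∈ Y) : UConn G Y a b :=
  IsDiWalk.reflTransGen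
    ⟨hp.1.imp_of_mem_imp fun _ _ hx hy hxy => ⟨hY _ hx, hY _ hy, Or.inl hxy⟩, hp.2⟩

theorem IsDiPath.uconn_of_notMem (hp : IsDiPath G p a b) (hw : w ∉ p) :
    UConn G (Set.univ \ {w}) a b :=
  hp.1.uconn fun _ hx => ⟨trivial, fun hxw => hw (hxw ▸ hx)⟩

/-- A walk through `w` can be rerouted through `c` instead. -/
theorem not_isCutvertexOn_of_forall_adj_uconn
    (hc : ∀ z ∈ X, symcl G w z → UConn G (X \ {w}) c z) : ¬ IsCutvertexOn G X w := by
  classical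
  rintro ⟨-, a, -, b, -, haw, hbw, hab, hnab⟩
  let f : V → V := fun x => if x = w then c else x
  have step : ∀ y z, restrict (symcl G) X y z → UConn G (X \ {w}) (f y) (f z) := by
    rintro y z ⟨hy, hz, hyz⟩
    by_cases hyw : y = w <;> by_cases hzw : z = w <;>
      simp only [f, hyw, hzw, if_true, if_false]
    · exact .refl
    · exact hc z hz (hyw ▸ hyz)
    · exact (hc y hy (hzw ▸ Or.symm hyz)).symm
    · exact .single ⟨⟨hy, hyw⟩, ⟨hz, hzw⟩, hyz⟩
  have hfab := Relation.ReflTransGen.lift' f step _ _ hab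
  exact hnab (by simpa [UConn, f, haw, hbw, Function.onFun] using hfab)

end Connectivity

section Superbubbloid

variable {G : V → V → Prop} {X : Set V} {s t u v w z : V} {p : List V}

theorem IsSuperbubbloid.mem_of_edge_to (hB : IsSuperbubbloid G X s t) (hwX : w ∈ X)
    (hws : w ≠ s) (hu : G u w) : u ∈ X := by
  by_contra huX
  have hsp := hB.enter_via_s w hwX u huX _ (isDiPath_pair hu fun h => huX (h ▸ hwX))
  rcases List.mem_pair.mp hsp with rfl | rfl
  · exact huX hB.s_mem
  · exact hws rfl

theorem IsSuperbubbloid.mem_of_edge_from (hB : IsSuperbubbloid G X s t) (hwX : w ∈ X)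
    (hwt : w ≠ t) (hv : G w v) : v ∈ X := by
  by_contra hvX
  have htp := hB.exit_via_t w hwX v hvX _ (isDiPath_pair hv fun h => hvX (h ▸ hwX))
  rcases List.mem_pair.mp htp with rfl | rfl
  · exact hwt rfl
  · exact hvX hB.t_mem

theorem IsSuperbubbloid.uconn_of_edge_to (hB : IsSuperbubbloid G X s t) (hwX : w ∈ X)
    (hws : w ≠ s) (hu : G u w) : UConn G (Set.univ \ {w}) s u := by
  obtain ⟨p, hp⟩ := (hB.reach_from_s u (hB.mem_of_edge_to hwX hws hu)).exists_isDiPath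
  refine hp.uconn_of_notMem fun hw => ?_
  obtain ⟨r, hr, -, hsr⟩ := hp.exists_suffix hw
  exact hws (hsr (hB.acyclic u (hB.mem_of_edge_to hwX hws hu) w hwX hu r hr).2).symm

theorem IsSuperbubbloid.uconn_of_edge_from (hB : IsSuperbubbloid G X s t) (hwX : w ∈ X)
    (hwt : w ≠ t) (hv : G w v) : UConn G (Set.univ \ {w}) v t := by
  obtain ⟨p, hp⟩ := (hB.reach_to_t v (hB.mem_of_edge_from hwX hwt hv)).exists_isDiPath
  refine hp.uconn_of_notMem fun hw => ?_
  obtain ⟨q, hq, htq⟩ := hp.exists_prefix hw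
  exact hwt (htq (hB.acyclic w hwX v (hB.mem_of_edge_from hwX hwt hv) hv q hq).1).symm

theorem IsSuperbubbloid.uconn_sink_of_isDiPath (hB : IsSuperbubbloid G X s t) (hwX : w ∈ X)
    (hwt : w ≠ t) (hu : u = w ∨ UConn G (Set.univ \ {w}) u t) (hp : IsDiPath G p u z)
    (hzw : z ≠ w) : UConn G (Set.univ \ {w}) z t := by
  by_cases hw : w ∈ p
  · obtain ⟨r, hr, -, -⟩ := hp.exists_suffix hw
    obtain ⟨v, q, hwv, hq, hwq⟩ := hr.exists_cons hzw.symm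
    exact (hq.uconn_of_notMem hwq).symm.trans (hB.uconn_of_edge_from hwX hwt hwv)
  · exact (hp.uconn_of_notMem hw).symm.trans (hu.resolve_left fun h => hw (h ▸ hp.head_mem))

def sinkSide (G : V → V → Prop) (X : Set V) (w t : V) : Set V :=
  {u | u ∈ X ∧ (u = w ∨ UConn G (Set.univ \ {w}) u t)}

theorem IsSuperbubbloid.mem_of_isDiPath_into_sinkSide (hB : IsSuperbubbloid G X s t)
    (hst : ¬ UConn G (Set.univ \ {w}) s t) (hu : u ∈ sinkSide G X w t)
    (hz : z ∉ sinkSide G X w t) (hp : IsDiPath G p z u) : w ∈ p := by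
  by_contra hw
  have hut := hu.2.resolve_left fun h => hw (h ▸ hp.getLast_mem)
  by_cases hzX : z ∈ X
  · exact hz ⟨hzX, .inr ((hp.uconn_of_notMem hw).trans hut)⟩
  · obtain ⟨r, hr, hrp, -⟩ := hp.exists_suffix (hB.enter_via_s u hu.1 z hzX p hp)
    exact hst ((hr.uconn_of_notMem fun h => hw (hrp h)).trans hut)

theorem IsSuperbubbloid.isSuperbubbloid_sinkSide (hB : IsSuperbubbloid G X s t)
    (hwX : w ∈ X) (hws : w ≠ s) (hwt : w ≠ t) (hst : ¬ UConn G (Set.univ \ {w}) s t) :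
    IsSuperbubbloid G (sinkSide G X w t) w t := by
  have hs : s ∉ sinkSide G X w t := fun h => h.2.elim hws.symm hst
  have hw : w ∈ sinkSide G X w t := ⟨hwX, .inl rfl⟩
  exact
    { s_mem := hw
      t_mem := ⟨hB.t_mem, .inr .refl⟩
      reach_from_s := fun u hu => by
        obtain ⟨p, hp⟩ := (hB.reach_from_s u hu.1).exists_isDiPath
        obtain ⟨r, hr, -⟩ := hp.exists_suffix (hB.mem_of_isDiPath_into_sinkSide hst hu hs hp)
        exact hr.1.reflTransGen
      reach_to_t := fun u hu => hB.reach_to_t u hu.1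
      enter_via_s := fun _ hu _ hz _ hp => hB.mem_of_isDiPath_into_sinkSide hst hu hz hp
      exit_via_t := fun u hu z hz p hp => by
        by_cases hzX : z ∈ X
        · have hzw : z ≠ w := fun h => hz (h ▸ hw)
          exact absurd ⟨hzX, .inr (hB.uconn_sink_of_isDiPath hwX hwt hu.2 hp hzw)⟩ hz
        · exact hB.exit_via_t u hu.1 z hzX p hp
      acyclic := fun u hu v hv huv p hp => by
        obtain ⟨htp, hsp⟩ := hB.acyclic u hu.1 v hv.1 huv p hp
        obtain ⟨r, hr, hrp, -⟩ := hp.exists_suffix hsp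
        exact ⟨htp, hrp (hB.mem_of_isDiPath_into_sinkSide hst hu hs hr)⟩
      no_back_edge := fun htw => hst (hB.uconn_of_edge_to hwX hws htw) }

theorem IsSuperbubble.uconn_of_mem_interior (h : IsSuperbubble G X s t) (hwX : w ∈ X)
    (hws : w ≠ s) (hwt : w ≠ t) : UConn G (Set.univ \ {w}) s t :=
  Classical.byContradiction fun hst =>
    h.2 w hwX hws ⟨_, h.1.isSuperbubbloid_sinkSide hwX hws hwt hst⟩

end Superbubbloid

/-- No vertex in the interior of a superbubble graph `B = G[X]`
is a cutvertex of the underlying undirected graph of `G`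
(the whole graph, i.e. the induced graph on `Set.univ`). -/
theorem statement_2 (G : V → V → Prop) (X : Set V) (s t : V)
    (h : IsSuperbubble G X s t) :
    ∀ w ∈ X, w ≠ s → w ≠ t → ¬ IsCutvertexOn G Set.univ w := by
  intro w hwX hws hwt
  have hst := h.uconn_of_mem_interior hwX hws hwt
  refine not_isCutvertexOn_of_forall_adj_uconn (c := s) fun z _ hz => ?_
  rcases hz with hwz | hzw
  · exact hst.trans (h.1.uconn_of_edge_from hwX hwt hwz).symm
  · exact h.1.uconn_of_edge_to hwX hws hzw

end Paper
end

section
/- Let G be a bidirected graph, let F1 and F2 be distinct sign-cut graphs of G, let uα be a vertex-side of F1 and vβ a vertex-side of F2. Then the pair {uα, vβ} is not a snarl of G. -/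
/-!
Bidirected graphs.  A vertex-side is a vertex with a sign (`true` = `+`, `false` = `−`);
a bidirected edge is an unordered pair of vertex-sides (an element of `Sym2 (V × Bool)`).
-/

namespace Paper

variable {V : Type}

/-- A vertex-side: a vertex together with a sign (`true` = `+`, `false` = `−`). -/
abbrev Side (V : Type) := V × Bool

/-- A bidirected graph on the vertex type `V`: a vertex set together with a set of
bidirected edges, each an unordered pair of vertex-sides with endpoints in `verts`. -/
structure BDGraph (V : Type) where
  verts : Set V
  E : Set (Sym2 (Side V))
  wf : ∀ e ∈ E, ∀ x ∈ e, Prod.fst x ∈ verts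

namespace BDGraph

/-- `(u, α)` is a vertex-side of `G`, i.e. some edge of `G` is incident to `u`
with sign `α`. -/
def HasSide (G : BDGraph V) (u : V) (α : Bool) : Prop :=
  ∃ e ∈ G.E, (u, α) ∈ e

/-- Adjacency in the underlying undirected graph `U(G)` (signs ignored). -/
def uadj (G : BDGraph V) (a b : V) : Prop :=
  ∃ e ∈ G.E, ∃ σ τ : Bool, e = s((a, σ), (b, τ))

/-- Connectivity (reachability) in the underlying undirected graph `U(G)`. -/
def uReach (G : BDGraph V) (a b : V) : Prop :=
  Relation.ReflTransGen G.uadj a b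

/-- `v` is a tip of `G`: no two edges of `G` are incident to `v` with different signs. -/
def IsTip (G : BDGraph V) (v : V) : Prop :=
  ∀ e ∈ G.E, ∀ f ∈ G.E, ∀ σ : Bool, (v, σ) ∈ e → (v, !σ) ∈ f → False

/-- `v` is a tip of `G` with sign `α`: every edge of `G` incident to `v` carries the
sign `α` at `v`. -/
def IsTipWith (G : BDGraph V) (v : V) (α : Bool) : Prop :=
  ∀ e ∈ G.E, ∀ σ : Bool, (v, σ) ∈ e → σ = α

/-- Deletion of the vertex `x` (and all edges incident to it). -/
def deleteVert (G : BDGraph V) (x : V) : BDGraph V where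
  verts := G.verts \ {x}
  E := {e | e ∈ G.E ∧ ∀ y : Side V, y ∈ e → y.1 ≠ x}
  wf := by
    rintro e ⟨he, hne⟩ y hy
    exact ⟨G.wf e he y hy, hne y hy⟩

/-- Deletion of a single edge. -/
def deleteEdge (G : BDGraph V) (e₀ : Sym2 (Side V)) : BDGraph V where
  verts := G.verts
  E := G.E \ {e₀}
  wf := by
    rintro e ⟨he, -⟩ y hy
    exact G.wf e he y hy

/-- `x` is a cutvertex of (the underlying undirected graph of) `G`: some two other
vertices are connected in `G` but no longer connected after deleting `x`. -/
def IsCutvertex (G : BDGraph V) (x : V) : Prop :=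
  x ∈ G.verts ∧ ∃ a ∈ G.verts, ∃ b ∈ G.verts, a ≠ x ∧ b ≠ x ∧
    G.uReach a b ∧ ¬ (G.deleteVert x).uReach a b

/-- `G` is connected (underlying undirected graph, nonempty). -/
def Conn (G : BDGraph V) : Prop :=
  G.verts.Nonempty ∧ ∀ a ∈ G.verts, ∀ b ∈ G.verts, G.uReach a b

/-- `H` is a subgraph of `G`. -/
def IsSubgraphOf (H G : BDGraph V) : Prop :=
  H.verts ⊆ G.verts ∧ H.E ⊆ G.E

end BDGraph

/-! ### Splitting a pair of vertex-sides

Splitting the vertex-side `u α` detaches all edges incident to `u` with the opposite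
sign `!α` and reattaches them to a new vertex `u'`.  We split the two vertex-sides
`u α` and `v β` (`u ≠ v`) simultaneously, realising the two new vertices as `Sum.inr u`
and `Sum.inr v` in the vertex type `V ⊕ V` (original vertices are `Sum.inl`). -/

open Classical in
/-- Where each vertex-side goes under the splitting of `u α` and `v β`. -/
noncomputable def splitMap (u : V) (α : Bool) (v : V) (β : Bool) :
    Side V → Side (V ⊕ V) :=
  fun x =>
    if x = (u, !α) then (Sum.inr u, !α)
    else if x = (v, !β) then (Sum.inr v, !β)
    else (Sum.inl x.1, x.2)

/-- The graph obtained from `G` by splitting the vertex-sides `u α` and `v β`. -/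
noncomputable def BDGraph.split2 (G : BDGraph V) (u : V) (α : Bool) (v : V) (β : Bool) :
    BDGraph (V ⊕ V) where
  verts := (Sum.inl '' G.verts) ∪ {Sum.inr u, Sum.inr v}
  E := Sym2.map (splitMap u α v β) '' G.E
  wf := by
    rintro e ⟨f, hf, rfl⟩ x hx
    rw [Sym2.mem_map] at hx
    obtain ⟨y, hy, rfl⟩ := hx
    by_cases h1 : y = (u, !α)
    · simp only [splitMap, if_pos h1]
      simp
    · by_cases h2 : y = (v, !β)
      · simp only [splitMap, if_neg h1, if_pos h2]
        simp
      · simp only [splitMap, if_neg h1, if_neg h2]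
        exact Set.mem_union_left _ ⟨y.1, G.wf f hf y hy, rfl⟩

/-- The pair of vertex-sides `{u α, v β}` is separable in `G`: after splitting `u α`
and `v β`, there is a connected component containing `u` and `v` but neither of the
two new vertices `u'`, `v'`. -/
noncomputable def Separable (G : BDGraph V) (u : V) (α : Bool) (v : V) (β : Bool) : Prop :=
  u ≠ v ∧
    (G.split2 u α v β).uReach (Sum.inl u) (Sum.inl v) ∧
    ¬ (G.split2 u α v β).uReach (Sum.inl u) (Sum.inr u) ∧
    ¬ (G.split2 u α v β).uReach (Sum.inl u) (Sum.inr v) ∧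
    ¬ (G.split2 u α v β).uReach (Sum.inl v) (Sum.inr u) ∧
    ¬ (G.split2 u α v β).uReach (Sum.inl v) (Sum.inr v)

/-- The vertex set of the snarl component of `{u α, v β}`: the vertices of `G` lying in
the connected component of `u` after splitting `u α` and `v β`. -/
noncomputable def SnarlVerts (G : BDGraph V) (u : V) (α : Bool) (v : V) (β : Bool) :
    Set V :=
  {w | (G.split2 u α v β).uReach (Sum.inl u) (Sum.inl w)}

/-- The edge set of the snarl component of `{u α, v β}`: the edges of `G` lying (after
splitting) in the connected component of `u`. -/
noncomputable def SnarlEdges (G : BDGraph V) (u : V) (α : Bool) (v : V) (β : Bool) :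
    Set (Sym2 (Side V)) :=
  {e | e ∈ G.E ∧ ∀ y : Side V, y ∈ e →
      (G.split2 u α v β).uReach (Sum.inl u) (splitMap u α v β y).1}

/-- `{u α, v β}` is a snarl of `G`: separable, and minimal in the sense that the snarl
component `X` contains no vertex `w ∉ {u,v}` with vertex-sides `w γ`, `w !γ` such that
`{u α, w γ}` and `{w !γ, v β}` are both separable in `G`. -/
noncomputable def IsSnarl (G : BDGraph V) (u : V) (α : Bool) (v : V) (β : Bool) : Prop :=
  Separable G u α v β ∧
    ¬ ∃ w ∈ SnarlVerts G u α v β, w ≠ u ∧ w ≠ v ∧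
        ∃ γ : Bool, Separable G u α w γ ∧ Separable G w (!γ) v β

/-! ### Sign-consistent cutvertices and sign-cut graphs -/

/-- A cutvertex `x` of `G` is sign-consistent if `x` is a tip in `G[V(C) ∪ {x}]` for
every connected component `C` of `G − x` (components are described by a member `a`). -/
def BDGraph.SignConsistent (G : BDGraph V) (x : V) : Prop :=
  G.IsCutvertex x ∧
    ∀ a ∈ (G.deleteVert x).verts,
      ∀ e ∈ G.E, ∀ f ∈ G.E,
        (∀ y : Side V, y ∈ e → y.1 = x ∨ (G.deleteVert x).uReach a y.1) →
        (∀ y : Side V, y ∈ f → y.1 = x ∨ (G.deleteVert x).uReach a y.1) →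
        ∀ σ τ : Bool, (x, σ) ∈ e → (x, τ) ∈ f → σ = τ

open Classical in
/-- After splitting every sign-consistent vertex of `G` and relabelling, the two copies
of a sign-consistent vertex `x` are identified with the pairs `(x, true)`, `(x, false)`;
any other vertex `w` is identified with `(w, true)`.  `scKey G` sends a vertex-side to
the copy of its vertex that it is attached to. -/
noncomputable def scKey (G : BDGraph V) : Side V → Side V :=
  fun x => if G.SignConsistent x.1 then x else (x.1, true)

lemma scKey_fst (G : BDGraph V) (y : Side V) : (scKey G y).1 = y.1 := by
  unfold scKey
  split <;> rfl

lemma scKey_idem (G : BDGraph V) (y : Side V) : scKey G (scKey G y) = scKey G y := by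
  by_cases h : G.SignConsistent y.1
  · simp [scKey, h]
  · simp [scKey, h]

/-- The graph obtained from `G` by simultaneously splitting all sign-consistent
vertices (on the vertex type `V × Bool`, cf. `scKey`). -/
noncomputable def BDGraph.splitAll (G : BDGraph V) : BDGraph (Side V) where
  verts := {p : Side V | p.1 ∈ G.verts ∧ scKey G p = p}
  E := Sym2.map (fun y : Side V => (scKey G y, y.2)) '' G.E
  wf := by
    rintro e ⟨f, hf, rfl⟩ x hx
    rw [Sym2.mem_map] at hx
    obtain ⟨y, hy, rfl⟩ := hx
    show (scKey G y).1 ∈ G.verts ∧ scKey G (scKey G y) = scKey G y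
    exact ⟨by rw [scKey_fst]; exact G.wf f hf y hy, scKey_idem G y⟩

/-- `F` is a sign-cut graph of `G`: one of the graphs obtained by splitting every
sign-consistent vertex of `G` and relabelling each new vertex `y'` back to `y`;
concretely, the subgraph of `G` corresponding to a connected component of
`G.splitAll`. -/
noncomputable def IsSignCutGraph (G F : BDGraph V) : Prop :=
  ∃ p ∈ G.splitAll.verts,
    F.verts = {w : V | ∃ σ : Bool, (w, σ) ∈ G.splitAll.verts ∧
                  G.splitAll.uReach p (w, σ)} ∧
    F.E = {e | e ∈ G.E ∧ ∀ y : Side V, y ∈ e → G.splitAll.uReach p (scKey G y)}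

/-! ### Blocks -/

/-- `H` is a block of `G`: a maximal connected subgraph of `G` without a cutvertex. -/
def IsBlock (G H : BDGraph V) : Prop :=
  H.IsSubgraphOf G ∧ H.Conn ∧ (∀ x, ¬ H.IsCutvertex x) ∧
    ∀ H' : BDGraph V, H'.IsSubgraphOf G → H.IsSubgraphOf H' → H'.Conn →
      (∀ x, ¬ H'.IsCutvertex x) → H'.verts = H.verts ∧ H'.E = H.E

/-- `H'` is a dangling block of `v` with respect to the block `H`:
a block of `G` different from `H` containing `v` with vertex-sides of opposite
signs at `v`. -/
def IsDanglingBlock (G H : BDGraph V) (v : V) (H' : BDGraph V) : Prop :=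
  IsBlock G H' ∧ ¬ (H'.verts = H.verts ∧ H'.E = H.E) ∧ v ∈ H'.verts ∧
    H'.HasSide v true ∧ H'.HasSide v false

/-- `{u,v}` is a separation pair of `H`: some two other vertices of `H` are connected
in `H` but no longer connected after removing `u` and `v`. -/
def IsSepPairB (H : BDGraph V) (u v : V) : Prop :=
  ∃ a ∈ H.verts, ∃ b ∈ H.verts, a ≠ u ∧ a ≠ v ∧ b ≠ u ∧ b ≠ v ∧
    H.uReach a b ∧ ¬ ((H.deleteVert u).deleteVert v).uReach a b

/-- `{u,v}` is a split pair of `H`: a separation pair of `H` or an edge of `H`. -/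
def IsSplitPairB (H : BDGraph V) (u v : V) : Prop :=
  IsSepPairB H u v ∨ ∃ e ∈ H.E, ∃ σ τ : Bool, e = s((u, σ), (v, τ))

/-! ### Bidirected walks, paths and cycloids

A bidirected walk `{v₁ α₁, v₂ α̂₂}, {v₂ α₂, v₃ α̂₃}, …` is encoded by the list
`[(v₁, α₁), (v₂, α₂), …]` of its *departing* sides: the first entry `(v₁, α₁)` is the
side of `v₁` on the first edge, and for `i ≥ 2` the walk arrives at `vᵢ` with sign
`!αᵢ` and departs with sign `αᵢ` (so the sign alternates at every internal vertex). -/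

/-- One step of a bidirected walk, between consecutive departing sides. -/
def BStep (G : BDGraph V) (x y : Side V) : Prop :=
  s(x, (y.1, !y.2)) ∈ G.E

/-- `p` encodes a bidirected walk of `G` (at least one edge). -/
def IsBWalk (G : BDGraph V) (p : List (Side V)) : Prop :=
  2 ≤ p.length ∧ p.Chain' (BStep G)

/-- `p` encodes a `u α`-`v β` bidirected path of `G`: a bidirected walk without
repeated vertices which starts at `u` with sign `α` and arrives at `v` with sign `β`
(so the last departing side recorded is `(v, !β)`). -/
def IsBPath (G : BDGraph V) (p : List (Side V)) (u : V) (α : Bool) (v : V) (β : Bool) :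
    Prop :=
  IsBWalk G p ∧ p.head? = some (u, α) ∧ p.getLast? = some (v, !β) ∧
    (p.map Prod.fst).Nodup

/-- `G` has a cycloid: a closed bidirected walk through pairwise distinct vertices
whose sign alternates at every vertex, except possibly at one (exceptional) vertex,
which we may take to be the starting vertex.  The closing edge either alternates at
the start vertex (`s(y, (x.1, !x.2))`) or fails to alternate there (`s(y, x)`). -/
def HasCycloid (G : BDGraph V) : Prop :=
  ∃ p : List (Side V), p ≠ [] ∧ (p.map Prod.fst).Nodup ∧ p.Chain' (BStep G) ∧
    ∃ x y : Side V, p.head? = some x ∧ p.getLast? = some y ∧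
      (s(y, (x.1, !x.2)) ∈ G.E ∨ s(y, x) ∈ G.E)

/-- `G` has a cycloid with an exceptional vertex: exactly one vertex (the starting
one, after rotation) fails sign alternation. -/
def HasExceptionalCycloid (G : BDGraph V) : Prop :=
  ∃ p : List (Side V), p ≠ [] ∧ (p.map Prod.fst).Nodup ∧ p.Chain' (BStep G) ∧
    ∃ x y : Side V, p.head? = some x ∧ p.getLast? = some y ∧ s(y, x) ∈ G.E

/-! ### Flipping a vertex -/

open Classical in
/-- Flip the sign of every vertex-side of `u`. -/
noncomputable def flipSide (u : V) : Side V → Side V :=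
  fun x => if x.1 = u then (x.1, !x.2) else x

/-- The graph obtained from `G` by flipping the vertex `u` (every positive vertex-side
of `u` becomes negative and vice versa). -/
noncomputable def BDGraph.flip (G : BDGraph V) (u : V) : BDGraph V where
  verts := G.verts
  E := Sym2.map (flipSide u) '' G.E
  wf := by
    rintro e ⟨f, hf, rfl⟩ x hx
    rw [Sym2.mem_map] at hx
    obtain ⟨y, hy, rfl⟩ := hx
    have h1 : (flipSide u y).1 = y.1 := by
      unfold flipSide
      split <;> rfl
    rw [h1]
    exact G.wf f hf y hy

/-!
Join `u` to `v` by a path inside the snarl component, i.e. avoiding the sides `u !α` and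
`v !β`, and follow it in `G.splitAll`, starting from the copy of `u` carrying the side `u α`.
Since `u α` and `v β` lie in different sign-cut graphs, the lifted walk cannot reach the copy
of `v` carrying `v β`, so it breaks at a sign-consistent vertex `a` entered at a side `a ρ`
and left at `a !ρ`.  The path shows that the component of `u` in `G - a` is attached to `a`
at `a ρ` and that of `v` at `a !ρ`; as `a` is a tip of each of these components, nothing
reachable from `u` after splitting `u α` and `a ρ` meets `a !ρ`, so `{u α, a ρ}` is separable,
and symmetrically so is `{a !ρ, v β}`.  This contradicts the minimality of the snarl.
-/

open Sum SimpleGraph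

namespace BDGraph

variable {G H : BDGraph V} {a b c w : V}

lemma uadj_symm (h : G.uadj a b) : G.uadj b a := by
  obtain ⟨e, he, σ, τ, rfl⟩ := h
  exact ⟨_, he, τ, σ, Sym2.eq_swap⟩

lemma uReach_symm (h : G.uReach a b) : G.uReach b a :=
  Relation.reflTransGen_swap.mp (Relation.ReflTransGen.mono (fun _ _ => uadj_symm) _ _ h)

lemma uadj_of_mem {y z : Side V} (h : s(y, z) ∈ G.E) : G.uadj y.1 z.1 :=
  ⟨_, h, y.2, z.2, rfl⟩

lemma uReach_mono (hE : G.E ⊆ H.E) (h : G.uReach a b) : H.uReach a b :=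
  Relation.ReflTransGen.mono (fun _ _ ⟨e, he, σ, τ, hst⟩ => ⟨e, hE he, σ, τ, hst⟩) _ _ h

lemma mem_verts_of_uReach (h : G.uReach a b) (ha : a ∈ G.verts) : b ∈ G.verts := by
  induction h with
  | refl => exact ha
  | tail _ hadj _ =>
    obtain ⟨e, he, σ, τ, rfl⟩ := hadj
    exact G.wf _ he _ (Sym2.mem_mk_right _ _)

lemma deleteVert_E_subset_deleteVert (hE : G.E ⊆ H.E) (x : V) :
    (G.deleteVert x).E ⊆ (H.deleteVert x).E :=
  fun _ he => ⟨hE he.1, he.2⟩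

lemma uadj_deleteVert (h : G.uadj a b) (ha : a ≠ c) (hb : b ≠ c) :
    (G.deleteVert c).uadj a b := by
  obtain ⟨e, he, σ, τ, rfl⟩ := h
  refine ⟨_, ⟨he, ?_⟩, σ, τ, rfl⟩
  intro y hy
  rcases Sym2.mem_iff.mp hy with rfl | rfl <;> assumption

lemma ne_of_uReach_deleteVert (h : (G.deleteVert c).uReach a b) (ha : a ≠ c) : b ≠ c := by
  induction h with
  | refl => exact ha
  | tail _ hadj _ =>
    obtain ⟨e, ⟨_, hne⟩, σ, τ, rfl⟩ := hadj
    exact hne _ (Sym2.mem_mk_right _ _)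

lemma uadj_of_fromRel_adj (h : (fromRel G.uadj).Adj a b) : G.uadj a b :=
  h.2.elim id uadj_symm

lemma reachable_fromRel_of_uReach (h : G.uReach a b) : (fromRel G.uadj).Reachable a b := by
  induction h with
  | refl => rfl
  | @tail b c _ hadj ih =>
    by_cases hbc : b = c
    · rwa [← hbc]
    · exact ih.trans (Adj.reachable ⟨hbc, Or.inl hadj⟩)

lemma uReach_deleteVert_of_walk {p : (fromRel G.uadj).Walk b w} (ha : a ∉ p.support) :
    (G.deleteVert a).uReach b w := by
  induction p with
  | nil => exact .refl
  | cons hadj p ih =>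
    rw [Walk.support_cons, List.mem_cons, not_or] at ha
    exact .head (uadj_deleteVert (uadj_of_fromRel_adj hadj) (Ne.symm ha.1)
      (fun h => ha.2 (h ▸ p.start_mem_support))) (ih ha.2)

def deleteSides (G : BDGraph V) (S : Set (Side V)) : BDGraph V where
  verts := G.verts
  E := {e | e ∈ G.E ∧ ∀ y ∈ e, y ∉ S}
  wf e he := G.wf e he.1

lemma deleteSides_E_subset (S : Set (Side V)) : (G.deleteSides S).E ⊆ G.E :=
  fun _ he => he.1

/-- `w` lies in a connected component of `G - a` joined to `a` by an edge at the side `a ρ`. -/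
def AttachedAt (G : BDGraph V) (a : V) (ρ : Bool) (w : V) : Prop :=
  ∃ y : Side V, s((a, ρ), y) ∈ G.E ∧ y.1 ≠ a ∧ (G.deleteVert a).uReach y.1 w

variable {ρ : Bool}

lemma AttachedAt.ne (h : G.AttachedAt a ρ w) : w ≠ a := by
  obtain ⟨y, -, hya, hr⟩ := h
  exact ne_of_uReach_deleteVert hr hya

lemma AttachedAt.mono (hE : G.E ⊆ H.E) (h : G.AttachedAt a ρ w) : H.AttachedAt a ρ w := by
  obtain ⟨y, he, hya, hr⟩ := h
  exact ⟨y, hE he, hya, uReach_mono (deleteVert_E_subset_deleteVert hE a) hr⟩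

lemma AttachedAt.uReach_deleteSides_insert {S : Set (Side V)}
    (h : (G.deleteSides S).AttachedAt a ρ w) :
    (G.deleteSides (insert (a, !ρ) S)).uReach w a := by
  obtain ⟨y, ⟨he, hS⟩, hya, hr⟩ := h
  have hsub : ((G.deleteSides S).deleteVert a).E ⊆ (G.deleteSides (insert (a, !ρ) S)).E := by
    rintro e ⟨⟨he, heS⟩, hea⟩
    refine ⟨he, fun x hx hxS => ?_⟩
    rcases hxS with rfl | hxS
    exacts [hea _ hx rfl, heS _ hx hxS]
  have hedge : s((a, ρ), y) ∈ (G.deleteSides (insert (a, !ρ) S)).E := by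
    refine ⟨he, fun x hx hxS => ?_⟩
    rcases Sym2.mem_iff.mp hx with rfl | rfl <;> rcases hxS with hxa | hxS
    · simp at hxa
    · exact hS _ (Sym2.mem_mk_left _ _) hxS
    · exact hya (congrArg Prod.fst hxa)
    · exact hS _ (Sym2.mem_mk_right _ _) hxS
  exact (uReach_symm (uReach_mono hsub hr)).tail (uadj_symm (uadj_of_mem hedge))

lemma SignConsistent.eq_of_attachedAt (hsc : G.SignConsistent a) {σ : Bool}
    (h₁ : G.AttachedAt a ρ w) (h₂ : G.AttachedAt a σ w) : ρ = σ := by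
  obtain ⟨y₁, he₁, hy₁, hr₁⟩ := h₁
  obtain ⟨y₂, he₂, -, hr₂⟩ := h₂
  have hw : w ∈ (G.deleteVert a).verts :=
    mem_verts_of_uReach hr₁ ⟨G.wf _ he₁ _ (Sym2.mem_mk_right _ _), hy₁⟩
  have hside : ∀ {σ' : Bool} {y : Side V}, (G.deleteVert a).uReach y.1 w →
      ∀ x ∈ s((a, σ'), y), x.1 = a ∨ (G.deleteVert a).uReach w x.1 := by
    intro σ' y hr x hx
    rcases Sym2.mem_iff.mp hx with rfl | rfl
    exacts [Or.inl rfl, Or.inr (uReach_symm hr)]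
  exact hsc.2 w hw _ he₁ _ he₂ (hside hr₁) (hside hr₂) ρ σ (Sym2.mem_mk_left _ _)
    (Sym2.mem_mk_left _ _)

lemma SignConsistent.loop_notMem (hsc : G.SignConsistent a) : s((a, ρ), (a, !ρ)) ∉ G.E := by
  intro he
  obtain ⟨-, w, hw, -, -, hwa, -⟩ := hsc.1
  have hloop : ∀ x ∈ s((a, ρ), (a, !ρ)), x.1 = a ∨ (G.deleteVert a).uReach w x.1 := by
    intro x hx
    rcases Sym2.mem_iff.mp hx with rfl | rfl <;> exact Or.inl rfl
  exact (Bool.eq_not_self ρ).mp (hsc.2 w ⟨hw, hwa⟩ _ he _ he hloop hloop ρ (!ρ)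
    (Sym2.mem_mk_left _ _) (Sym2.mem_mk_right _ _))

lemma SignConsistent.attachedAt_step (hsc : G.SignConsistent a) {y z : Side V}
    (hy : y.1 = a ∨ G.AttachedAt a ρ y.1) (hyz : s(y, z) ∈ G.E) (hya : y ≠ (a, !ρ)) :
    z ≠ (a, !ρ) ∧ (z.1 = a ∨ G.AttachedAt a ρ z.1) := by
  rcases hy with hy | hy
  · obtain rfl : y = (a, ρ) := Prod.ext hy (Bool.ne_not.mp fun h => hya (Prod.ext hy h))
    refine ⟨by rintro rfl; exact hsc.loop_notMem hyz, ?_⟩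
    by_cases hza : z.1 = a
    · exact Or.inl hza
    · exact Or.inr ⟨z, hyz, hza, .refl⟩
  · have hy_ne := hy.ne
    refine ⟨?_, ?_⟩
    · rintro rfl
      exact (Bool.eq_not_self ρ).mp
        (hsc.eq_of_attachedAt hy ⟨y, by rwa [Sym2.eq_swap], hy_ne, .refl⟩)
    · by_cases hza : z.1 = a
      · exact Or.inl hza
      · obtain ⟨y₀, he₀, hy₀, hr₀⟩ := hy
        exact Or.inr ⟨y₀, he₀, hy₀, hr₀.tail (uadj_deleteVert (uadj_of_mem hyz) hy_ne hza)⟩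

end BDGraph

open BDGraph

section split2

variable {G : BDGraph V} {u v a b c : V} {α β ρ : Bool}

lemma splitMap_of_ne {y : Side V} (hu : y ≠ (u, !α)) (hv : y ≠ (v, !β)) :
    splitMap u α v β y = (inl y.1, y.2) := by
  simp only [splitMap, if_neg hu, if_neg hv]

lemma splitMap_left : splitMap u α v β (u, !α) = (inr u, !α) := if_pos rfl

lemma fst_eq_of_splitMap_fst_eq_inl {y : Side V} (h : (splitMap u α v β y).1 = inl c) :
    y.1 = c ∧ y ≠ (u, !α) ∧ y ≠ (v, !β) := by
  unfold splitMap at h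
  split_ifs at h
  simp_all

lemma eq_of_splitMap_fst_eq_inr {y : Side V} (h : (splitMap u α v β y).1 = inr c) :
    (y = (u, !α) ∧ c = u) ∨ (y = (v, !β) ∧ c = v) := by
  unfold splitMap at h
  split_ifs at h <;> simp_all

lemma uadj_split2_splitMap {y z : Side V} (h : s(y, z) ∈ G.E) :
    (G.split2 u α v β).uadj (splitMap u α v β y).1 (splitMap u α v β z).1 :=
  ⟨_, ⟨_, h, rfl⟩, _, _, rfl⟩

lemma uadj_split2 {y z : Side V} (h : s(y, z) ∈ G.E) (hyu : y ≠ (u, !α)) (hyv : y ≠ (v, !β))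
    (hzu : z ≠ (u, !α)) (hzv : z ≠ (v, !β)) :
    (G.split2 u α v β).uadj (inl y.1) (inl z.1) := by
  have := uadj_split2_splitMap (u := u) (α := α) (v := v) (β := β) h
  rwa [splitMap_of_ne hyu hyv, splitMap_of_ne hzu hzv] at this

lemma exists_of_uadj_split2 {s t : V ⊕ V} (h : (G.split2 u α v β).uadj s t) :
    ∃ y z : Side V, s(y, z) ∈ G.E ∧
      (splitMap u α v β y).1 = s ∧ (splitMap u α v β z).1 = t := by
  obtain ⟨_, ⟨e, he, rfl⟩, σ, τ, hst⟩ := h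
  induction e using Sym2.ind with
  | _ y z =>
    rcases Sym2.eq_iff.mp hst with ⟨hy, hz⟩ | ⟨hy, hz⟩
    · exact ⟨y, z, he, by rw [hy], by rw [hz]⟩
    · exact ⟨z, y, by rwa [Sym2.eq_swap], by rw [hz], by rw [hy]⟩

lemma uReach_split2_of_deleteSides {S : Set (Side V)} (hu : (u, !α) ∈ S) (hv : (v, !β) ∈ S)
    (h : (G.deleteSides S).uReach a b) : (G.split2 u α v β).uReach (inl a) (inl b) := by
  refine Relation.ReflTransGen.lift inl (fun x y hxy => ?_) _ _ h
  obtain ⟨e, ⟨he, hS⟩, σ, τ, rfl⟩ := hxy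
  have hne : ∀ z ∈ s((x, σ), (y, τ)), z ≠ (u, !α) ∧ z ≠ (v, !β) := fun z hz =>
    ⟨by rintro rfl; exact hS _ hz hu, by rintro rfl; exact hS _ hz hv⟩
  have hx := hne _ (Sym2.mem_mk_left _ _)
  have hy := hne _ (Sym2.mem_mk_right _ _)
  exact uadj_split2 he hx.1 hx.2 hy.1 hy.2

lemma split2_comm : G.split2 u α v β = G.split2 v β u α := by
  have hmap : splitMap u α v β = splitMap v β u α := by
    funext x
    unfold splitMap
    split_ifs <;> simp_all
  simp only [split2, hmap, Set.pair_comm]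

end split2

section separable

variable {G : BDGraph V} {u v a : V} {α β ρ : Bool}

lemma Separable.symm (h : Separable G u α v β) : Separable G v β u α := by
  obtain ⟨huv, hr, h₁, h₂, h₃, h₄⟩ := h
  rw [Separable, ← split2_comm]
  exact ⟨huv.symm, uReach_symm hr, h₄, h₃, h₂, h₁⟩

lemma separable_of_uReach (huv : u ≠ v) (hr : (G.split2 u α v β).uReach (inl u) (inl v))
    (hu : ¬ (G.split2 u α v β).uReach (inl u) (inr u))
    (hv : ¬ (G.split2 u α v β).uReach (inl u) (inr v)) : Separable G u α v β :=
  ⟨huv, hr, hu, hv, fun h => hu (hr.trans h), fun h => hv (hr.trans h)⟩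

lemma Separable.uReach_deleteSides (hsep : Separable G u α v β) :
    (G.deleteSides {(u, !α), (v, !β)}).uReach u v := by
  obtain ⟨-, hreach, hsuu, hsuv, -, -⟩ := hsep
  suffices h : ∀ t, (G.split2 u α v β).uReach (inl u) t →
      ∃ w, t = inl w ∧ (G.deleteSides {(u, !α), (v, !β)}).uReach u w by
    obtain ⟨w, hw, hr⟩ := h _ hreach
    rwa [← inl_injective hw] at hr
  intro t ht
  induction ht with
  | refl => exact ⟨u, rfl, .refl⟩
  | @tail s t hst hadj ih =>
    obtain ⟨w, rfl, hw⟩ := ih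
    obtain ⟨y, z, hyz, hy, hz⟩ := exists_of_uadj_split2 hadj
    cases t with
    | inl w' =>
      obtain ⟨rfl, hyu, hyv⟩ := fst_eq_of_splitMap_fst_eq_inl hy
      obtain ⟨rfl, hzu, hzv⟩ := fst_eq_of_splitMap_fst_eq_inl hz
      refine ⟨_, rfl, hw.tail (uadj_of_mem ⟨hyz, ?_⟩)⟩
      rintro x hx hxS
      rcases Sym2.mem_iff.mp hx with rfl | rfl <;> rcases hxS with rfl | rfl <;> contradiction
    | inr c =>
      rcases eq_of_splitMap_fst_eq_inr hz with ⟨-, hc⟩ | ⟨-, hc⟩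
      exacts [absurd (hc ▸ hst.tail hadj) hsuu, absurd (hc ▸ hst.tail hadj) hsuv]

lemma BDGraph.SignConsistent.eq_inl_of_uReach_split2 (hsc : G.SignConsistent a)
    (hsuu : ¬ (G.split2 u α v β).uReach (inl u) (inr u))
    (hu : G.AttachedAt a ρ u) (hv : G.AttachedAt a (!ρ) v) {t : V ⊕ V}
    (ht : (G.split2 u α a ρ).uReach (inl u) t) :
    ∃ w, t = inl w ∧ (G.split2 u α v β).uReach (inl u) (inl w) ∧
      (w = a ∨ G.AttachedAt a ρ w) := by
  have hne_v : ∀ {w}, (w = a ∨ G.AttachedAt a ρ w) → w ≠ v := by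
    rintro w hw rfl
    rcases hw with rfl | hw
    · exact hv.ne rfl
    · exact (Bool.eq_not_self ρ).mp (hsc.eq_of_attachedAt hw hv)
  induction ht with
  | refl => exact ⟨u, rfl, .refl, Or.inr hu⟩
  | @tail s t _ hadj ih =>
    obtain ⟨w, rfl, hX, hw⟩ := ih
    obtain ⟨y, z, hyz, hy, hz⟩ := exists_of_uadj_split2 hadj
    obtain ⟨rfl, hyu, hya⟩ := fst_eq_of_splitMap_fst_eq_inl hy
    have hyv : y ≠ (v, !β) := fun h => hne_v hw (congrArg Prod.fst h)
    obtain ⟨hza, hz'⟩ := hsc.attachedAt_step hw hyz hya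
    cases t with
    | inl w' =>
      obtain ⟨rfl, hzu, -⟩ := fst_eq_of_splitMap_fst_eq_inl hz
      have hzv : z ≠ (v, !β) := fun h => hne_v hz' (congrArg Prod.fst h)
      exact ⟨_, rfl, hX.tail (uadj_split2 hyz hyu hyv hzu hzv), hz'⟩
    | inr c =>
      rcases eq_of_splitMap_fst_eq_inr hz with ⟨rfl, -⟩ | ⟨h, -⟩
      · have hstep := uadj_split2_splitMap (u := u) (α := α) (v := v) (β := β) hyz
        rw [splitMap_of_ne hyu hyv, splitMap_left] at hstep
        exact absurd (hX.tail hstep) hsuu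
      · exact absurd h hza

lemma Separable.separable_of_attachedAt {S : Set (Side V)} (hsep : Separable G u α v β)
    (hsc : G.SignConsistent a) (hS : (u, !α) ∈ S) (hu : (G.deleteSides S).AttachedAt a ρ u)
    (hv : G.AttachedAt a (!ρ) v) : Separable G u α a ρ := by
  refine separable_of_uReach hu.ne
    (uReach_split2_of_deleteSides (Set.mem_insert_of_mem _ hS) (Set.mem_insert _ _)
      hu.uReach_deleteSides_insert) ?_ ?_ <;>
  · intro h
    obtain ⟨w, hw, -⟩ := hsc.eq_inl_of_uReach_split2 hsep.2.2.1
      (hu.mono (deleteSides_E_subset S)) hv h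
    exact inr_ne_inl hw

end separable

lemma _root_.SimpleGraph.Walk.IsPath.start_notMem_support_tail {W : Type} {Γ : SimpleGraph W}
    {x y : W} {p : Γ.Walk x y} (hp : p.IsPath) : x ∉ p.support.tail := by
  have hnd := hp.support_nodup
  rw [← p.cons_tail_support] at hnd
  exact (List.nodup_cons.mp hnd).1

section lift

variable {G : BDGraph V} {u v a : V} {α β : Bool} {S : Set (Side V)}

lemma scKey_congr {ρ τ : Bool} (h : G.SignConsistent a → ρ = τ) :
    scKey G (a, ρ) = scKey G (a, τ) := by
  by_cases hsc : G.SignConsistent a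
  · rw [h hsc]
  · simp only [scKey, if_neg hsc]

lemma uadj_splitAll {y z : Side V} (h : s(y, z) ∈ G.E) :
    G.splitAll.uadj (scKey G y) (scKey G z) :=
  ⟨_, ⟨_, h, rfl⟩, y.2, z.2, rfl⟩

/-- Lifting a path from `u` to `v` to `G.splitAll`, started at the side `a ρ` of its current
vertex `a`.  The invariants say that the part of the path already walked has been lifted, that
it enters `a` at the side `a ρ`, and that it avoids every later vertex `c`. -/
lemma splitAll_uReach_or_exists_signConsistent_of_isPath (hu : (u, !α) ∈ S)
    (hv : (v, !β) ∈ S) (huv : u ≠ v) (ρ : Bool) (p : (fromRel (G.deleteSides S).uadj).Walk a v)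
    (hp : p.IsPath) (hup : u ∉ p.support.tail)
    (hlift : G.splitAll.uReach (scKey G (u, α)) (scKey G (a, ρ)))
    (harr : (a = u ∧ ρ = α) ∨ (G.deleteSides S).AttachedAt a ρ u)
    (hprefix : ∀ c ∈ p.support.tail, ((G.deleteSides S).deleteVert c).uReach u a) :
    G.splitAll.uReach (scKey G (u, α)) (scKey G (v, β)) ∨
      ∃ a ρ, G.SignConsistent a ∧ (G.deleteSides S).AttachedAt a ρ u ∧
        (G.deleteSides S).AttachedAt a (!ρ) v := by
  induction p generalizing ρ with
  | nil =>
    left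
    rcases harr with ⟨rfl, -⟩ | ⟨y, ⟨-, hS⟩, -, -⟩
    · exact absurd rfl huv
    · obtain rfl : ρ = β := Bool.ne_not.mp fun h => hS _ (Sym2.mem_mk_left _ _) (h ▸ hv)
      exact hlift
  | @cons a b _ hadj p ih =>
    simp only [Walk.support_cons, List.tail_cons] at hup hprefix
    rw [Walk.cons_isPath_iff] at hp
    have hab : a ≠ b := hadj.1
    obtain ⟨_, he, τ, σ, rfl⟩ := uadj_of_fromRel_adj hadj
    by_cases hbrk : G.SignConsistent a ∧ τ ≠ ρ
    · obtain ⟨hsc, hτ⟩ := hbrk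
      obtain rfl : τ = !ρ := Bool.eq_not.mpr hτ
      refine Or.inr ⟨a, ρ, hsc, harr.resolve_left ?_, (b, σ), he, hab.symm,
        uReach_deleteVert_of_walk hp.2⟩
      rintro ⟨rfl, rfl⟩
      exact he.2 _ (Sym2.mem_mk_left _ _) hu
    · have hkey : scKey G (a, ρ) = scKey G (a, τ) :=
        scKey_congr fun hsc => (not_and_not_right.mp hbrk hsc).symm
      refine ih hv huv σ hp.1 (fun h => hup (List.mem_of_mem_tail h)) ?_
        (Or.inr ⟨(a, τ), by rwa [Sym2.eq_swap], hab, uReach_symm (hprefix b p.start_mem_support)⟩) ?_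
      · exact hlift.tail (hkey ▸ uadj_splitAll he.1)
      · intro c hc
        have hac : a ≠ c := fun h => hp.2 (h ▸ List.mem_of_mem_tail hc)
        have hbc : b ≠ c := fun h => hp.1.start_notMem_support_tail (h ▸ hc)
        exact (hprefix c (List.mem_of_mem_tail hc)).tail
          (uadj_deleteVert (uadj_of_mem he) hac hbc)

lemma Separable.splitAll_uReach_or_exists_signConsistent (hsep : Separable G u α v β) :
    G.splitAll.uReach (scKey G (u, α)) (scKey G (v, β)) ∨
      ∃ a ρ, G.SignConsistent a ∧ (G.deleteSides {(u, !α), (v, !β)}).AttachedAt a ρ u ∧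
        (G.deleteSides {(u, !α), (v, !β)}).AttachedAt a (!ρ) v := by
  obtain ⟨p, hp⟩ := (reachable_fromRel_of_uReach hsep.uReach_deleteSides).exists_isPath
  exact splitAll_uReach_or_exists_signConsistent_of_isPath (by simp) (by simp) hsep.1 α p hp
    hp.start_notMem_support_tail .refl (Or.inl ⟨rfl, rfl⟩) fun _ _ => .refl

end lift

lemma IsSignCutGraph.eq_of_uReach {G F₁ F₂ : BDGraph V} (h₁ : IsSignCutGraph G F₁)
    (h₂ : IsSignCutGraph G F₂) {u v : V} {α β : Bool} (hu : F₁.HasSide u α)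
    (hv : F₂.HasSide v β) (h : G.splitAll.uReach (scKey G (u, α)) (scKey G (v, β))) :
    F₁.verts = F₂.verts ∧ F₁.E = F₂.E := by
  obtain ⟨p₁, -, hV₁, hE₁⟩ := h₁
  obtain ⟨p₂, -, hV₂, hE₂⟩ := h₂
  obtain ⟨e₁, he₁, hue₁⟩ := hu
  obtain ⟨e₂, he₂, hve₂⟩ := hv
  rw [hE₁] at he₁
  rw [hE₂] at he₂
  have hp : G.splitAll.uReach p₁ p₂ :=
    ((he₁.2 _ hue₁).trans h).trans (uReach_symm (he₂.2 _ hve₂))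
  have hiff : ∀ x, G.splitAll.uReach p₁ x ↔ G.splitAll.uReach p₂ x :=
    fun _ => ⟨(uReach_symm hp).trans, hp.trans⟩
  rw [hV₁, hV₂, hE₁, hE₂]
  simp only [hiff, and_self]

/-- If `F1` and `F2` are distinct sign-cut graphs of `G`, `u α` is a
vertex-side of `F1` and `v β` is a vertex-side of `F2`, then `{u α, v β}` is not a
snarl of `G`. -/
theorem statement_6 (G F1 F2 : BDGraph V)
    (h1 : IsSignCutGraph G F1) (h2 : IsSignCutGraph G F2)
    (hne : ¬ (F1.verts = F2.verts ∧ F1.E = F2.E))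
    (u v : V) (α β : Bool)
    (hu : F1.HasSide u α) (hv : F2.HasSide v β) :
    ¬ IsSnarl G u α v β := by
  rintro ⟨hsep, hmin⟩
  rcases hsep.splitAll_uReach_or_exists_signConsistent with hlift | ⟨a, ρ, hsc, hau, hav⟩
  · exact hne (h1.eq_of_uReach h2 hu hv hlift)
  have hu_mem : (u, !α) ∈ ({(u, !α), (v, !β)} : Set (Side V)) := by simp
  have hv_mem : (v, !β) ∈ ({(u, !α), (v, !β)} : Set (Side V)) := by simp
  have ha : a ∈ SnarlVerts G u α v β :=
    uReach_split2_of_deleteSides (Set.mem_insert_of_mem _ hu_mem)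
      (Set.mem_insert_of_mem _ hv_mem) hau.uReach_deleteSides_insert
  have hsep₁ : Separable G u α a ρ :=
    hsep.separable_of_attachedAt hsc hu_mem hau (hav.mono (deleteSides_E_subset _))
  have hsep₂ : Separable G v β a (!ρ) :=
    hsep.symm.separable_of_attachedAt hsc hv_mem hav
      (by rw [Bool.not_not]; exact hau.mono (deleteSides_E_subset _))
  exact hmin ⟨a, ha, hau.ne.symm, hav.ne.symm, ρ, hsep₁, hsep₂.symm⟩

end Paper
end

section
/- Let G be a bidirected graph and let uα and vβ be vertex-sides of G such that {uα, vβ} is separable with snarl component X. If X contains two internally vertex-disjoint undirected u-v paths, then {uα, vβ} is a snarl of G. -/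
/-!
Bidirected graphs.  A vertex-side is a vertex with a sign (`true` = `+`, `false` = `−`);
a bidirected edge is an unordered pair of vertex-sides (an element of `Sym2 (V × Bool)`).
-/

namespace Paper

variable {V : Type}

/-- Adjacency inside the snarl component `X` of `{u α, v β}` (via the edges of `X`). -/
noncomputable def XAdj (G : BDGraph V) (u : V) (α : Bool) (v : V) (β : Bool)
    (a b : V) : Prop :=
  ∃ e ∈ SnarlEdges G u α v β, ∃ σ τ : Bool, e = s((a, σ), (b, τ))

/-- `p` is an undirected path from `a` to `b` inside the snarl component of
`{u α, v β}`. -/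
noncomputable def IsUPathX (G : BDGraph V) (u : V) (α : Bool) (v : V) (β : Bool)
    (p : List V) (a b : V) : Prop :=
  p.Chain' (XAdj G u α v β) ∧ p.head? = some a ∧ p.getLast? = some b ∧ p.Nodup

end Paper

/-!
Suppose some `w ∈ X \ {u, v}` had sides `w γ`, `w !γ` with `{u α, w γ}` and `{w !γ, v β}`
separable. Every edge of `X` avoids the two detached sides `u !α`, `v !β`, so a walk in `X`
that avoids `w` survives both splittings. Follow a walk of `X` from `u` to its first visit of
`w`, entering along an edge at the side `w τ`. If `τ = !γ`, splitting `{u α, w γ}` moves that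
side to the new vertex `w'`, so `u` reaches `w'`. If `τ = γ`, splitting `{w !γ, v β}` moves it
to `w'`; one of the two internally disjoint `u`-`v` paths avoids `w`, so `v` reaches `u` and
hence `w'`. Either way separability fails.
-/

/-- The first visit of a walk to `w`: either the walk is trivial, or it reaches a
neighbour `x` of `w` without passing through `w`. -/
theorem Relation.ReflTransGen.eq_or_exists_avoiding_and_rel {α : Type*} {r : α → α → Prop}
    {a w : α} (h : Relation.ReflTransGen r a w) :
    a = w ∨ ∃ x, x ≠ w ∧
      Relation.ReflTransGen (fun b c => r b c ∧ b ≠ w ∧ c ≠ w) a x ∧ r x w := by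
  induction h using Relation.ReflTransGen.head_induction_on with
  | refl => exact Or.inl rfl
  | @head a c hac _ ih =>
    by_cases haw : a = w
    · exact Or.inl haw
    by_cases hcw : c = w
    · exact Or.inr ⟨a, haw, .refl, hcw ▸ hac⟩
    rcases ih with rfl | ⟨x, hxw, hcx, hxw'⟩
    · exact absurd rfl hcw
    · exact Or.inr ⟨x, hxw, .head ⟨hac, haw, hcw⟩ hcx, hxw'⟩

namespace Paper

variable {V : Type}

instance BDGraph.instStdSymmUadj (G : BDGraph V) : Std.Symm G.uadj :=
  ⟨fun _ _ ⟨e, he, σ, τ, hστ⟩ => ⟨e, he, τ, σ, hστ.trans Sym2.eq_swap⟩⟩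

theorem BDGraph.uReach.symm {G : BDGraph V} {a b : V} (h : G.uReach a b) : G.uReach b a :=
  Std.Symm.symm (r := Relation.ReflTransGen G.uadj) _ _ h

section Splitting

variable {G : BDGraph V} {u v : V} {α β : Bool}

theorem splitMap_eq_inl_iff {y : Side V} :
    splitMap u α v β y = (Sum.inl y.1, y.2) ↔ y ≠ (u, !α) ∧ y ≠ (v, !β) := by
  unfold splitMap
  split_ifs <;> simp_all

theorem splitMap_eq_inl_of_fst_ne {y : Side V} (hu : (splitMap u α v β y).1 ≠ Sum.inr u)
    (hv : (splitMap u α v β y).1 ≠ Sum.inr v) : splitMap u α v β y = (Sum.inl y.1, y.2) := by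
  unfold splitMap at *
  split_ifs at * <;> simp_all

theorem BDGraph.split2_uadj_iff {a b : V ⊕ V} :
    (G.split2 u α v β).uadj a b ↔
      ∃ x y, s(x, y) ∈ G.E ∧ (splitMap u α v β x).1 = a ∧ (splitMap u α v β y).1 = b := by
  constructor
  · rintro ⟨_, ⟨e, he, rfl⟩, σ, τ, hmap⟩
    induction e using Sym2.ind with | h x y => ?_
    rw [Sym2.map_mk, Sym2.eq_iff] at hmap
    rcases hmap with ⟨hx, hy⟩ | ⟨hx, hy⟩
    · exact ⟨x, y, he, by rw [hx], by rw [hy]⟩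
    · exact ⟨y, x, Sym2.eq_swap ▸ he, by rw [hy], by rw [hx]⟩
  · rintro ⟨x, y, he, rfl, rfl⟩
    exact ⟨_, ⟨_, he, rfl⟩, _, _, rfl⟩

end Splitting

section SnarlComponent

variable {G : BDGraph V} {u v : V} {α β : Bool}

theorem ne_of_mem_snarlEdges (hsep : Separable G u α v β) {e : Sym2 (Side V)}
    (he : e ∈ SnarlEdges G u α v β) {y : Side V} (hy : y ∈ e) :
    y ≠ (u, !α) ∧ y ≠ (v, !β) :=
  splitMap_eq_inl_iff.1 <| splitMap_eq_inl_of_fst_ne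
    (fun h => hsep.2.2.1 (h ▸ he.2 y hy)) (fun h => hsep.2.2.2.1 (h ▸ he.2 y hy))

theorem reflTransGen_xAdj_of_mem_snarlVerts (hsep : Separable G u α v β) {w : V}
    (hw : w ∈ SnarlVerts G u α v β) : Relation.ReflTransGen (XAdj G u α v β) u w := by
  suffices ∀ z, (G.split2 u α v β).uReach (Sum.inl u) z →
      ∀ x, z = Sum.inl x → Relation.ReflTransGen (XAdj G u α v β) u x from this _ hw w rfl
  intro z hz
  induction hz with
  | refl => rintro x ⟨⟩; exact .refl
  | @tail b c hub hbc ih =>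
    rintro x rfl
    obtain ⟨y₁, y₂, he, rfl, hy₂⟩ := BDGraph.split2_uadj_iff.1 hbc
    have heX : s(y₁, y₂) ∈ SnarlEdges G u α v β := by
      refine ⟨he, fun y hy => ?_⟩
      rcases Sym2.mem_iff.1 hy with rfl | rfl
      exacts [hub, hy₂ ▸ hub.tail hbc]
    have h₁ := splitMap_eq_inl_iff.2 (ne_of_mem_snarlEdges hsep heX (Sym2.mem_mk_left _ _))
    have h₂ := splitMap_eq_inl_iff.2 (ne_of_mem_snarlEdges hsep heX (Sym2.mem_mk_right _ _))
    rw [h₂] at hy₂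
    cases hy₂
    exact (ih _ (by rw [h₁])).tail ⟨_, heX, y₁.2, y₂.2, rfl⟩

theorem IsUPathX.reflTransGen_avoiding {p : List V} {a b w : V}
    (hp : IsUPathX G u α v β p a b) (hw : w ∉ p) :
    Relation.ReflTransGen (fun x y => XAdj G u α v β x y ∧ x ≠ w ∧ y ≠ w) a b := by
  obtain ⟨hchain, hhead, hlast, -⟩ := hp
  have hne : p ≠ [] := by rintro rfl; simp at hhead
  have hwalk := List.relationReflTransGen_of_exists_isChain p
    (hchain.imp_of_mem_imp (S := fun x y => XAdj G u α v β x y ∧ x ≠ w ∧ y ≠ w)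
      fun x y hx hy hxy => ⟨hxy, fun h => hw (h ▸ hx), fun h => hw (h ▸ hy)⟩) hne
  rwa [(List.head_eq_iff_head?_eq_some hne).2 hhead,
    (List.getLast_eq_iff_getLast?_eq_some hne).2 hlast] at hwalk

variable {c d : V} {δ ε : Bool} {w : V}

theorem split2_uReach_inl_of_reflTransGen (hsep : Separable G u α v β)
    (hkept : ∀ y : Side V, y.1 ≠ w → y ≠ (u, !α) → y ≠ (v, !β) → y ≠ (c, !δ) ∧ y ≠ (d, !ε))
    {a b : V} (h : Relation.ReflTransGen (fun x y => XAdj G u α v β x y ∧ x ≠ w ∧ y ≠ w) a b) :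
    (G.split2 c δ d ε).uReach (Sum.inl a) (Sum.inl b) := by
  induction h with
  | refl => exact .refl
  | @tail x y _ hxy ih =>
    obtain ⟨⟨e, heX, σ, τ, rfl⟩, hxw, hyw⟩ := hxy
    have hkept' (z : Side V) (hz : z ∈ s((x, σ), (y, τ))) (hzw : z.1 ≠ w) :
        splitMap c δ d ε z = (Sum.inl z.1, z.2) :=
      splitMap_eq_inl_iff.2 (hkept z hzw (ne_of_mem_snarlEdges hsep heX hz).1
        (ne_of_mem_snarlEdges hsep heX hz).2)
    refine ih.tail (BDGraph.split2_uadj_iff.2 ⟨_, _, heX.1, ?_, ?_⟩)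
    · rw [hkept' _ (Sym2.mem_mk_left _ _) hxw]
    · rw [hkept' _ (Sym2.mem_mk_right _ _) hyw]

theorem split2_uReach_inr (hsep : Separable G u α v β)
    (hkept : ∀ y : Side V, y.1 ≠ w → y ≠ (u, !α) → y ≠ (v, !β) → y ≠ (c, !δ) ∧ y ≠ (d, !ε))
    {x : V} {σ τ : Bool} (hux : Relation.ReflTransGen
      (fun a b => XAdj G u α v β a b ∧ a ≠ w ∧ b ≠ w) u x) (hxw : x ≠ w)
    (he : s((x, σ), (w, τ)) ∈ SnarlEdges G u α v β)
    (hdetached : (splitMap c δ d ε (w, τ)).1 = Sum.inr w) :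
    (G.split2 c δ d ε).uReach (Sum.inl u) (Sum.inr w) := by
  have hx := ne_of_mem_snarlEdges hsep he (Sym2.mem_mk_left _ _)
  refine (split2_uReach_inl_of_reflTransGen hsep hkept hux).tail
    (BDGraph.split2_uadj_iff.2 ⟨_, _, he.1, ?_, hdetached⟩)
  rw [splitMap_eq_inl_iff.2 (hkept _ hxw hx.1 hx.2)]

end SnarlComponent

/-- If `{u α, v β}` is separable with snarl component `X`, and `X`
contains two internally vertex-disjoint undirected `u`-`v` paths, then `{u α, v β}`
is a snarl of `G`. -/
theorem statement_14 (G : BDGraph V) (u v : V) (α β : Bool)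
    (hsep : Separable G u α v β)
    (hpaths : ∃ p q : List V, IsUPathX G u α v β p u v ∧ IsUPathX G u α v β q u v ∧
        ∀ w, w ∈ p → w ∈ q → w = u ∨ w = v) :
    IsSnarl G u α v β := by
  refine ⟨hsep, ?_⟩
  rintro ⟨w, hwX, hwu, hwv, γ, hsep_uw, hsep_wv⟩
  rcases (reflTransGen_xAdj_of_mem_snarlVerts hsep hwX).eq_or_exists_avoiding_and_rel with
    rfl | ⟨x, hxw, hux, e, heX, σ, τ, rfl⟩
  · exact hwu rfl
  rcases Bool.eq_or_eq_not τ γ with rfl | rfl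
  · have hkept (y : Side V) (hyw : y.1 ≠ w) (_ : y ≠ (u, !α)) (hv : y ≠ (v, !β)) :
        y ≠ (w, !!τ) ∧ y ≠ (v, !β) := ⟨fun h => hyw (congrArg Prod.fst h), hv⟩
    obtain ⟨p, q, hp, hq, hdisj⟩ := hpaths
    have hpq : w ∉ p ∨ w ∉ q := by
      by_contra! h
      rcases hdisj w h.1 h.2 with rfl | rfl <;> simp_all
    have huv : (G.split2 w (!τ) v β).uReach (Sum.inl u) (Sum.inl v) := by
      refine split2_uReach_inl_of_reflTransGen hsep hkept ?_
      rcases hpq with hp' | hq'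
      exacts [hp.reflTransGen_avoiding hp', hq.reflTransGen_avoiding hq']
    exact hsep_wv.2.2.2.2.1 (huv.symm.trans
      (split2_uReach_inr hsep hkept hux hxw heX (by simp [splitMap])))
  · have hkept (y : Side V) (hyw : y.1 ≠ w) (hu : y ≠ (u, !α)) (_ : y ≠ (v, !β)) :
        y ≠ (u, !α) ∧ y ≠ (w, !γ) := ⟨hu, fun h => hyw (congrArg Prod.fst h)⟩
    exact hsep_uw.2.2.2.1 (split2_uReach_inr hsep hkept hux hxw heX (by simp [splitMap, hwu]))

end Paper
end
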